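/- arXiv:2512.06349 — 2 statements merged into one kernel-verified Lean document; each statement's English description precedes it below -/
import Mathlib

section
/- Assume ρ* > 0 and that η(x) < ∞ for every G-measurable x ∈ L²(Ω;ℝⁿ). Then η is a norm on the space of G-measurable elements of L²(Ω;ℝⁿ): η(x) ≥ 0 for all x, with η(x) = 0 if and only if x = 0 almost surely; η(α·x) = |α|·η(x) for every scalar α; and η(x + y) ≤ η(x) + η(y) for all x, y. -/
open Matrix MeasureTheory ProbabilityTheory
open scoped ENNReal Classical

noncomputable section

namespace SCS

/-! ### Matrix-analytic definitions -/

/-- Rayleigh-quotient definition of the largest eigenvalue of a symmetric matrix. -/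
def lamMax {n : ℕ} (M : Matrix (Fin n) (Fin n) ℝ) : ℝ :=
  ⨆ x : {x : Fin n → ℝ // x ⬝ᵥ x = 1}, x.1 ⬝ᵥ M.mulVec x.1

/-- Rayleigh-quotient definition of the smallest eigenvalue of a symmetric matrix. -/
def lamMin {n : ℕ} (M : Matrix (Fin n) (Fin n) ℝ) : ℝ :=
  ⨅ x : {x : Fin n → ℝ // x ⬝ᵥ x = 1}, x.1 ⬝ᵥ M.mulVec x.1

/-- Spectral norm (the operator norm induced by the Euclidean norm). -/
def specNorm {p q : ℕ} (M : Matrix (Fin p) (Fin q) ℝ) : ℝ :=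
  Real.sqrt (lamMax (Mᵀ * M))

variable {n m : ℕ}

/-- `R(P) = BᵀPB + σ²·B̄ᵀPB̄`. -/
def Rop (σ : ℝ) (B Bbar : Matrix (Fin n) (Fin m) ℝ) (P : Matrix (Fin n) (Fin n) ℝ) :
    Matrix (Fin m) (Fin m) ℝ :=
  Bᵀ * P * B + σ ^ 2 • (Bbarᵀ * P * Bbar)

/-- `S(P) = AᵀPB + σ²·ĀᵀPB̄`. -/
def Sop (σ : ℝ) (A Abar : Matrix (Fin n) (Fin n) ℝ) (B Bbar : Matrix (Fin n) (Fin m) ℝ)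
    (P : Matrix (Fin n) (Fin n) ℝ) : Matrix (Fin n) (Fin m) ℝ :=
  Aᵀ * P * B + σ ^ 2 • (Abarᵀ * P * Bbar)

/-- `Φ(P) = AᵀPA + σ²·ĀᵀPĀ − S(P)·R(P)⁻¹·S(P)ᵀ`. -/
def Phi (σ : ℝ) (A Abar : Matrix (Fin n) (Fin n) ℝ) (B Bbar : Matrix (Fin n) (Fin m) ℝ)
    (P : Matrix (Fin n) (Fin n) ℝ) : Matrix (Fin n) (Fin n) ℝ :=
  Aᵀ * P * A + σ ^ 2 • (Abarᵀ * P * Abar)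
    - Sop σ A Abar B Bbar P * (Rop σ B Bbar P)⁻¹ * (Sop σ A Abar B Bbar P)ᵀ

/-- `K(P) = R(P)⁻¹·S(P)ᵀ`. -/
def Kgain (σ : ℝ) (A Abar : Matrix (Fin n) (Fin n) ℝ) (B Bbar : Matrix (Fin n) (Fin m) ℝ)
    (P : Matrix (Fin n) (Fin n) ℝ) : Matrix (Fin m) (Fin n) ℝ :=
  (Rop σ B Bbar P)⁻¹ * (Sop σ A Abar B Bbar P)ᵀ

/-- `C_A = λ_max(AAᵀ + σ²·ĀĀᵀ)`. -/
def CA (σ : ℝ) (A Abar : Matrix (Fin n) (Fin n) ℝ) : ℝ :=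
  lamMax (A * Aᵀ + σ ^ 2 • (Abar * Abarᵀ))

/-- `δ_τ = (τ/n)/((1−τ)·C_A + τ)`. -/
def deltaTau (σ : ℝ) (A Abar : Matrix (Fin n) (Fin n) ℝ) (τ : ℝ) : ℝ :=
  (τ / (n : ℝ)) / ((1 - τ) * CA σ A Abar + τ)

/-- The regularized normalized operator
`Φ̂_τ(P) = ((1−τ)·Φ(P) + (τ/n)·I) / Tr((1−τ)·Φ(P) + (τ/n)·I)`. -/
def PhiHat (σ : ℝ) (A Abar : Matrix (Fin n) (Fin n) ℝ) (B Bbar : Matrix (Fin n) (Fin m) ℝ)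
    (τ : ℝ) (P : Matrix (Fin n) (Fin n) ℝ) : Matrix (Fin n) (Fin n) ℝ :=
  (Matrix.trace ((1 - τ) • Phi σ A Abar B Bbar P
      + (τ / (n : ℝ)) • (1 : Matrix (Fin n) (Fin n) ℝ)))⁻¹ •
    ((1 - τ) • Phi σ A Abar B Bbar P + (τ / (n : ℝ)) • (1 : Matrix (Fin n) (Fin n) ℝ))

/-- Inverse of the positive-semidefinite square root (junk value `0` off the PSD cone),
so `invSqrt P = P^{−1/2}` for positive definite `P`. -/
def invSqrt {n : ℕ} (P : Matrix (Fin n) (Fin n) ℝ) : Matrix (Fin n) (Fin n) ℝ :=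
  if h : P.PosSemidef then
    (h.1.eigenvectorUnitary.1 * diagonal (fun i => Real.sqrt (h.1.eigenvalues i))
      * (star h.1.eigenvectorUnitary : Matrix (Fin n) (Fin n) ℝ))⁻¹ else 0

/-- `L(P) = λ_min(P^{−1/2}·Φ(P)·P^{−1/2})`. -/
def Lval (σ : ℝ) (A Abar : Matrix (Fin n) (Fin n) ℝ) (B Bbar : Matrix (Fin n) (Fin m) ℝ)
    (P : Matrix (Fin n) (Fin n) ℝ) : ℝ :=
  lamMin (invSqrt P * Phi σ A Abar B Bbar P * invSqrt P)

/-- `U(P) = λ_max(P^{−1/2}·Φ(P)·P^{−1/2})`. -/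
def Uval (σ : ℝ) (A Abar : Matrix (Fin n) (Fin n) ℝ) (B Bbar : Matrix (Fin n) (Fin m) ℝ)
    (P : Matrix (Fin n) (Fin n) ℝ) : ℝ :=
  lamMax (invSqrt P * Phi σ A Abar B Bbar P * invSqrt P)

/-- The trace-normalized slice `S_a = {X symmetric : X ⪰ a·I, Tr X = 1}`. -/
def Slice (a : ℝ) : Set (Matrix (Fin n) (Fin n) ℝ) :=
  {X | X.IsSymm ∧ (X - a • (1 : Matrix (Fin n) (Fin n) ℝ)).PosSemidef ∧ X.trace = 1}

/-- `α_A = ‖A‖² + σ²·‖Ā‖²` (spectral norms). -/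
def alphaA (σ : ℝ) (A Abar : Matrix (Fin n) (Fin n) ℝ) : ℝ :=
  specNorm A ^ 2 + σ ^ 2 * specNorm Abar ^ 2

/-- `α_S = ‖A‖·‖B‖ + σ²·‖Ā‖·‖B̄‖`. -/
def alphaS (σ : ℝ) (A Abar : Matrix (Fin n) (Fin n) ℝ) (B Bbar : Matrix (Fin n) (Fin m) ℝ) : ℝ :=
  specNorm A * specNorm B + σ ^ 2 * specNorm Abar * specNorm Bbar

/-- `α_R = ‖B‖² + σ²·‖B̄‖²`. -/
def alphaR (σ : ℝ) (B Bbar : Matrix (Fin n) (Fin m) ℝ) : ℝ :=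
  specNorm B ^ 2 + σ ^ 2 * specNorm Bbar ^ 2

/-- `c_R(a) = 1/(a·λ_min(R₀))`. -/
def cR (σ : ℝ) (B Bbar : Matrix (Fin n) (Fin m) ℝ) (a : ℝ) : ℝ :=
  1 / (a * lamMin (Bᵀ * B + σ ^ 2 • (Bbarᵀ * Bbar)))

/-- `L_Φ(a) = α_A + 2·α_S²·c_R(a) + α_S²·α_R·c_R(a)²`. -/
def LPhi (σ : ℝ) (A Abar : Matrix (Fin n) (Fin n) ℝ) (B Bbar : Matrix (Fin n) (Fin m) ℝ)
    (a : ℝ) : ℝ :=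
  alphaA σ A Abar + 2 * alphaS σ A Abar B Bbar ^ 2 * cR σ B Bbar a
    + alphaS σ A Abar B Bbar ^ 2 * alphaR σ B Bbar * cR σ B Bbar a ^ 2

/-- `C_Φ(a) = α_A + α_S²·c_R(a)`. -/
def CPhi (σ : ℝ) (A Abar : Matrix (Fin n) (Fin n) ℝ) (B Bbar : Matrix (Fin n) (Fin m) ℝ)
    (a : ℝ) : ℝ :=
  alphaA σ A Abar + alphaS σ A Abar B Bbar ^ 2 * cR σ B Bbar a

/-- The contraction modulus `Λ(τ)`. -/
def LambdaTau (σ : ℝ) (A Abar : Matrix (Fin n) (Fin n) ℝ) (B Bbar : Matrix (Fin n) (Fin m) ℝ)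
    (τ : ℝ) : ℝ :=
  (1 - τ) * LPhi σ A Abar B Bbar (deltaTau σ A Abar τ) / τ
    + (1 - τ) * ((1 - τ) * CPhi σ A Abar B Bbar (deltaTau σ A Abar τ) + τ / (n : ℝ))
        * (n : ℝ) * LPhi σ A Abar B Bbar (deltaTau σ A Abar τ) / τ ^ 2

/-- The directional derivative `DΦ(P)[H]`. -/
def DPhi (σ : ℝ) (A Abar : Matrix (Fin n) (Fin n) ℝ) (B Bbar : Matrix (Fin n) (Fin m) ℝ)
    (P H : Matrix (Fin n) (Fin n) ℝ) : Matrix (Fin n) (Fin n) ℝ :=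
  Aᵀ * H * A + σ ^ 2 • (Abarᵀ * H * Abar)
    - (Aᵀ * H * B + σ ^ 2 • (Abarᵀ * H * Bbar)) * (Rop σ B Bbar P)⁻¹ * (Sop σ A Abar B Bbar P)ᵀ
    - Sop σ A Abar B Bbar P * (Rop σ B Bbar P)⁻¹ * (Bᵀ * H * A + σ ^ 2 • (Bbarᵀ * H * Abar))
    + Sop σ A Abar B Bbar P * (Rop σ B Bbar P)⁻¹ * (Bᵀ * H * B + σ ^ 2 • (Bbarᵀ * H * Bbar))
        * (Rop σ B Bbar P)⁻¹ * (Sop σ A Abar B Bbar P)ᵀ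

/-- `s_τ(P) = Tr((1−τ)·Φ(P) + (τ/n)·I)`. -/
def sTau (σ : ℝ) (A Abar : Matrix (Fin n) (Fin n) ℝ) (B Bbar : Matrix (Fin n) (Fin m) ℝ)
    (τ : ℝ) (P : Matrix (Fin n) (Fin n) ℝ) : ℝ :=
  Matrix.trace ((1 - τ) • Phi σ A Abar B Bbar P + (τ / (n : ℝ)) • (1 : Matrix (Fin n) (Fin n) ℝ))

/-- The directional derivative
`DΦ̂_τ(P)[H] = ((1−τ)/s_τ(P))·(DΦ(P)[H] − Φ̂_τ(P)·Tr(DΦ(P)[H]))`. -/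
def DPhiHat (σ : ℝ) (A Abar : Matrix (Fin n) (Fin n) ℝ) (B Bbar : Matrix (Fin n) (Fin m) ℝ)
    (τ : ℝ) (P H : Matrix (Fin n) (Fin n) ℝ) : Matrix (Fin n) (Fin n) ℝ :=
  ((1 - τ) / sTau σ A Abar B Bbar τ P) •
    (DPhi σ A Abar B Bbar P H
      - Matrix.trace (DPhi σ A Abar B Bbar P H) • PhiHat σ A Abar B Bbar τ P)

/-- The local Lipschitz modulus `Lip(P,τ) = sup{‖DΦ̂_τ(P)[H]‖ : H symmetric, ‖H‖ = 1}`. -/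
def LipMod (σ : ℝ) (A Abar : Matrix (Fin n) (Fin n) ℝ) (B Bbar : Matrix (Fin n) (Fin m) ℝ)
    (τ : ℝ) (P : Matrix (Fin n) (Fin n) ℝ) : ℝ :=
  ⨆ H : {H : Matrix (Fin n) (Fin n) ℝ // H.IsSymm ∧ specNorm H = 1},
    specNorm (DPhiHat σ A Abar B Bbar τ P H.1)

/-! ### Probabilistic definitions -/

/-- The Gaussian measure on `ℝ` with mean `0` and variance `σ²`. -/
def gauss (σ : ℝ) : Measure ℝ := gaussianReal 0 ⟨σ ^ 2, sq_nonneg σ⟩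

/-- The Gaussian expectation `E_ω[((A+Āω)x + (B+B̄ω)v)ᵀ·P·((A+Āω)x + (B+B̄ω)v)]`. -/
def qform (σ : ℝ) (A Abar : Matrix (Fin n) (Fin n) ℝ) (B Bbar : Matrix (Fin n) (Fin m) ℝ)
    (P : Matrix (Fin n) (Fin n) ℝ) (x : Fin n → ℝ) (v : Fin m → ℝ) : ℝ :=
  ∫ s, (((A + s • Abar).mulVec x + (B + s • Bbar).mulVec v) ⬝ᵥ
      P.mulVec ((A + s • Abar).mulVec x + (B + s • Bbar).mulVec v)) ∂(gauss σ)

/-- The data of the stochastic control system: a probability space `(Ω, F, Pr)`,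
system matrices `A, Ā, B, B̄`, a noise level `σ > 0`, an i.i.d. sequence `w` of
Gaussian random variables with mean `0` and variance `σ²`, and a sub-σ-algebra `G`
independent of the noise. -/
structure Ctx (n m : ℕ) (Ω : Type) [mΩ : MeasurableSpace Ω] where
  Pr : Measure Ω
  isProb : IsProbabilityMeasure Pr
  σ : ℝ
  hσ : 0 < σ
  A : Matrix (Fin n) (Fin n) ℝ
  Abar : Matrix (Fin n) (Fin n) ℝ
  B : Matrix (Fin n) (Fin m) ℝ
  Bbar : Matrix (Fin n) (Fin m) ℝ
  w : ℕ → Ω → ℝ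
  hw_meas : ∀ k, Measurable (w k)
  hw_gauss : ∀ k, Pr.map (w k) = gauss σ
  hw_iid : iIndepFun w Pr
  G : MeasurableSpace Ω
  hG : G ≤ mΩ
  hw_indep_G : Indep (⨆ k, MeasurableSpace.comap (w k) inferInstance) G Pr

variable {Ω : Type} [MeasurableSpace Ω]

/-- The filtration `F_k = G ∨ σ(ω₀, …, ω_{k−1})`. -/
def Ctx.Fk (C : Ctx n m Ω) (k : ℕ) : MeasurableSpace Ω :=
  C.G ⊔ ⨆ i ∈ Finset.range k, MeasurableSpace.comap (C.w i) inferInstance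

/-- Admissible policies: `u_k` is `F_k`-measurable and square-integrable. -/
def Ctx.Admissible (C : Ctx n m Ω) (u : ℕ → Ω → Fin m → ℝ) : Prop :=
  ∀ k, Measurable[C.Fk k] (u k) ∧ MemLp (u k) 2 C.Pr

/-- Admissible initial states: `G`-measurable and square-integrable. -/
def Ctx.InitOK (C : Ctx n m Ω) (x : Ω → Fin n → ℝ) : Prop :=
  Measurable[C.G] x ∧ MemLp x 2 C.Pr

/-- The state trajectory `x_{k+1} = (A + Ā·ω_k)x_k + (B + B̄·ω_k)u_k`. -/
def Ctx.traj (C : Ctx n m Ω) (x0 : Ω → Fin n → ℝ) (u : ℕ → Ω → Fin m → ℝ) :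
    ℕ → Ω → Fin n → ℝ
  | 0 => x0
  | k + 1 => fun s =>
      (C.A + C.w k s • C.Abar).mulVec (C.traj x0 u k s)
      + (C.B + C.w k s • C.Bbar).mulVec (u k s)

/-- `E[xᵀx]`. -/
def msSq {n : ℕ} (Pr : Measure Ω) (x : Ω → Fin n → ℝ) : ℝ := ∫ s, x s ⬝ᵥ x s ∂Pr

/-- The mean-square norm `‖x‖_ms = (E[xᵀx])^{1/2}`. -/
def msNorm {n : ℕ} (Pr : Measure Ω) (x : Ω → Fin n → ℝ) : ℝ := Real.sqrt (msSq Pr x)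

/-- The mean-square stabilizing rate `ρ(u)` of a policy. -/
def Ctx.rate (C : Ctx n m Ω) (u : ℕ → Ω → Fin m → ℝ) : ℝ :=
  sInf {ρ : ℝ | 0 ≤ ρ ∧ ∃ κ : ℝ, 0 ≤ κ ∧ ∀ x0, C.InitOK x0 → ∀ k : ℕ,
    msSq C.Pr (C.traj x0 u k) ≤ κ * ρ ^ (2 * k) * msSq C.Pr x0}

/-- The optimal stabilizing rate `ρ* = inf_{u ∈ U} ρ(u)`. -/
def Ctx.rhoStar (C : Ctx n m Ω) : ℝ :=
  sInf {r : ℝ | ∃ u, C.Admissible u ∧ r = C.rate u}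

/-- `η(x) = inf_{u ∈ U} sup_{k ∈ ℕ} ‖x_k‖_ms/(ρ*)^k` (with values in `[0,∞]`). -/
def Ctx.eta (C : Ctx n m Ω) (x : Ω → Fin n → ℝ) : ℝ≥0∞ :=
  ⨅ (u : ℕ → Ω → Fin m → ℝ) (_ : C.Admissible u),
    ⨆ k : ℕ, ENNReal.ofReal (msNorm C.Pr (C.traj x u k) / C.rhoStar ^ k)

/-- The per-trajectory mean-square stabilizing rate `ρ(u; x₀)`. -/
def Ctx.rateAt (C : Ctx n m Ω) (x0 : Ω → Fin n → ℝ) (u : ℕ → Ω → Fin m → ℝ) : ℝ :=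
  sInf {ρ : ℝ | 0 ≤ ρ ∧ ∃ κ : ℝ, 0 ≤ κ ∧ ∀ k : ℕ,
    msSq C.Pr (C.traj x0 u k) ≤ κ * ρ ^ (2 * k) * msSq C.Pr x0}

/-- The cost `J(x₀,u) = limsup_k (1/k)·log(E[x_kᵀx_k]/E[x₀ᵀx₀])`. -/
def Ctx.J (C : Ctx n m Ω) (x0 : Ω → Fin n → ℝ) (u : ℕ → Ω → Fin m → ℝ) : ℝ :=
  Filter.limsup
    (fun k : ℕ => (1 / (k : ℝ)) * Real.log (msSq C.Pr (C.traj x0 u k) / msSq C.Pr x0))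
    Filter.atTop

/-- Feedback policies: `u_k = μ_k(x_k)` for Borel-measurable `μ_k`. -/
def Ctx.IsFeedback (C : Ctx n m Ω) (x0 : Ω → Fin n → ℝ) (u : ℕ → Ω → Fin m → ℝ) : Prop :=
  ∃ μ : ℕ → (Fin n → ℝ) → Fin m → ℝ, (∀ k, Measurable (μ k)) ∧
    ∀ k s, u k s = μ k (C.traj x0 u k s)

/-- The closed-loop trajectory under a stationary feedback law `μ`. -/
def Ctx.fbTraj (C : Ctx n m Ω) (x0 : Ω → Fin n → ℝ) (μ : (Fin n → ℝ) → Fin m → ℝ) :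
    ℕ → Ω → Fin n → ℝ
  | 0 => x0
  | k + 1 => fun s =>
      (C.A + C.w k s • C.Abar).mulVec (C.fbTraj x0 μ k s)
      + (C.B + C.w k s • C.Bbar).mulVec (μ (C.fbTraj x0 μ k s))

/-- The stationary policy `u* given by `u*_k = μ(x*_k)` along its own closed-loop
trajectory, for a stationary feedback law `μ`. -/
def Ctx.fbPolicy (C : Ctx n m Ω) (x0 : Ω → Fin n → ℝ) (μ : (Fin n → ℝ) → Fin m → ℝ) :
    ℕ → Ω → Fin m → ℝ :=
  fun k s => μ (C.fbTraj x0 μ k s)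

/-- The linear feedback policy `u*_k = −K·x*_k` along its own trajectory. -/
def Ctx.linFbPolicy (C : Ctx n m Ω) (x0 : Ω → Fin n → ℝ) (K : Matrix (Fin m) (Fin n) ℝ) :
    ℕ → Ω → Fin m → ℝ :=
  C.fbPolicy x0 (fun x => -(K.mulVec x))

/-- `ξ_♯(x) = inf_{v ∈ ℝ^m} ‖(A + Ā·ω)x + (B + B̄·ω)v‖_ms`, realized with `ω = ω₀`. -/
def Ctx.xiSharp (C : Ctx n m Ω) (x : Ω → Fin n → ℝ) : ℝ :=
  ⨅ v : Fin m → ℝ, msNorm C.Pr (fun s =>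
    (C.A + C.w 0 s • C.Abar).mulVec (x s) + (C.B + C.w 0 s • C.Bbar).mulVec v)

/-- Extended-real logarithm: `log t` for `t > 0` and `−∞` for `t ≤ 0`. -/
def elog (t : ℝ) : EReal := if t ≤ 0 then ⊥ else ((Real.log t : ℝ) : EReal)

/-- The cost `J(x₀,u)` interpreted with values in `[−∞,∞]`. -/
def Ctx.Je (C : Ctx n m Ω) (x0 : Ω → Fin n → ℝ) (u : ℕ → Ω → Fin m → ℝ) : EReal :=
  Filter.limsup
    (fun k : ℕ => ((1 / (k : ℝ) : ℝ) : EReal) * elog (msSq C.Pr (C.traj x0 u k) / msSq C.Pr x0))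
    Filter.atTop

/-!
`η(x)` is an infimum, over admissible policies `u`, of the weighted peak
`sup_k ‖x_k‖_ms / ρ*^k`. The trajectory depends linearly on the pair (initial state, policy), and
admissible policies form a vector space: scaling `x` and `u` by `α` scales every `x_k` by `α`,
and the trajectory of `x + y` under `u + v` is the sum of the two trajectories. Homogeneity and
the triangle inequality for `η` thus reduce to those of `‖·‖_ms`, the norm of
`L²(Ω; EuclideanSpace ℝ (Fin n))`, provided the trajectories are square integrable. They are,
since `ω_k` is independent of `F_k`, with respect to which `x_k` and `u_k` are measurable, so
`E[ω_k² |x_k|²] = σ² E[|x_k|²]`. Finally the `k = 0` term gives `η(x) ≥ ‖x‖_ms`, hence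
definiteness.
-/

end SCS

namespace MeasureTheory

variable {Ω : Type*} {mΩ : MeasurableSpace Ω} {μ : Measure Ω}

theorem MemLp.withLp_toLp {ι : Type*} [Fintype ι] {f : Ω → ι → ℝ} (hf : MemLp f 2 μ) :
    MemLp (fun s => WithLp.toLp 2 (f s)) 2 μ :=
  (EuclideanSpace.equiv ι ℝ).symm.toContinuousLinearMap.comp_memLp' hf

theorem MemLp.matrix_mulVec {ι κ : Type*} [Fintype ι] [Fintype κ] {p : ℝ≥0∞} {f : Ω → κ → ℝ}
    (hf : MemLp f p μ) (M : Matrix ι κ ℝ) : MemLp (fun s => M *ᵥ f s) p μ :=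
  (Matrix.mulVecLin M).toContinuousLinearMap.comp_memLp' hf

theorem measurable_add_smul_mulVec {ι κ : Type*} [Fintype ι] [Fintype κ] (M M' : Matrix ι κ ℝ)
    {g : Ω → ℝ} {h : Ω → κ → ℝ} (hg : Measurable g) (hh : Measurable h) :
    Measurable fun s => (M + g s • M') *ᵥ h s := by
  have hc : Continuous fun p : ℝ × (κ → ℝ) => (M + p.1 • M') *ᵥ p.2 := by fun_prop
  exact hc.measurable.comp (hg.prodMk hh)

end MeasureTheory

namespace ProbabilityTheory

variable {Ω : Type*} {mΩ : MeasurableSpace Ω} {μ : Measure Ω}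

theorem Indep.sup_right_of_indep_sup [IsZeroOrProbabilityMeasure μ] {m₁ m₂ m₃ : MeasurableSpace Ω}
    (h₁ : m₁ ≤ mΩ) (h₂ : m₂ ≤ mΩ) (h₃ : m₃ ≤ mΩ) (h₁₂ : Indep m₁ m₂ μ)
    (h : Indep (m₁ ⊔ m₂) m₃ μ) : Indep m₁ (m₂ ⊔ m₃) μ := by
  set p : Set (Set Ω) :=
    Set.image2 (· ∩ ·) {s | MeasurableSet[m₂] s} {s | MeasurableSet[m₃] s}
  have hp : IsPiSystem p := by
    rintro _ ⟨a, ha, b, hb, rfl⟩ _ ⟨c, hc, d, hd, rfl⟩ -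
    exact ⟨a ∩ c, ha.inter hc, b ∩ d, hb.inter hd, Set.inter_inter_inter_comm a c b d⟩
  have hgen : m₂ ⊔ m₃ = MeasurableSpace.generateFrom p := by
    refine le_antisymm (sup_le ?_ ?_) (MeasurableSpace.generateFrom_le ?_)
    · exact fun s hs => MeasurableSpace.measurableSet_generateFrom
        ⟨s, hs, Set.univ, MeasurableSet.univ, Set.inter_univ s⟩
    · exact fun s hs => MeasurableSpace.measurableSet_generateFrom
        ⟨Set.univ, MeasurableSet.univ, s, hs, Set.univ_inter s⟩
    · rintro _ ⟨a, ha, b, hb, rfl⟩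
      exact (le_sup_left (b := m₃) _ ha).inter (le_sup_right (a := m₂) _ hb)
  refine IndepSets.indep h₁ (sup_le h₂ h₃) (@MeasurableSpace.isPiSystem_measurableSet Ω m₁) hp
    (@MeasurableSpace.generateFrom_measurableSet Ω m₁).symm hgen
    ((IndepSets_iff _ _ μ).2 ?_)
  rintro a _ ha ⟨b, hb, c, hc, rfl⟩
  have h₁₂₃ := (Indep_iff _ _ μ).1 h
  have h₂₃ := (Indep_iff _ _ μ).1 (indep_of_indep_of_le_left h le_sup_right)
  calc μ (a ∩ (b ∩ c)) = μ ((a ∩ b) ∩ c) := by rw [Set.inter_assoc]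
    _ = μ a * μ b * μ c := by
      rw [h₁₂₃ _ _ ((le_sup_left (b := m₂) _ ha).inter (le_sup_right (a := m₁) _ hb)) hc,
        (Indep_iff _ _ μ).1 h₁₂ _ _ ha hb]
    _ = μ a * μ (b ∩ c) := by rw [h₂₃ _ _ hb hc, mul_assoc]

theorem IndepFun.memLp_two_smul {E : Type*} [NormedAddCommGroup E] [NormedSpace ℝ E]
    [MeasurableSpace E] [OpensMeasurableSpace E] {X : Ω → ℝ} {Y : Ω → E}
    (hXY : IndepFun X Y μ) (hX : MemLp X 2 μ) (hY : MemLp Y 2 μ) :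
    MemLp (fun ω => X ω • Y ω) 2 μ := by
  rw [memLp_two_iff_integrable_sq_norm (f := fun ω => X ω • Y ω) (hX.1.smul hY.1)]
  have hind : IndepFun (fun ω => X ω ^ 2) (fun ω => ‖Y ω‖ ^ 2) μ :=
    hXY.comp (measurable_id.pow_const 2) (measurable_norm.pow_const 2)
  refine (hind.integrable_mul hX.integrable_sq
    ((memLp_two_iff_integrable_sq_norm hY.1).1 hY)).congr (ae_of_all _ fun ω => ?_)
  simp [norm_smul, mul_pow]

end ProbabilityTheory

namespace SCS

variable {Ω : Type} [MeasurableSpace Ω] {μ : Measure Ω} {d : ℕ}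

theorem msNorm_smul (α : ℝ) (f : Ω → Fin d → ℝ) :
    msNorm μ (fun s => α • f s) = |α| * msNorm μ f := by
  have hsq : msSq μ (fun s => α • f s) = α ^ 2 * msSq μ f := by
    simp only [msSq, ← integral_const_mul, smul_dotProduct, dotProduct_smul, smul_eq_mul]
    ring_nf
  rw [msNorm, msNorm, hsq, Real.sqrt_mul (sq_nonneg α), Real.sqrt_sq_eq_abs]

theorem dotProduct_self_eq_norm_toLp_sq (v : Fin d → ℝ) : v ⬝ᵥ v = ‖WithLp.toLp 2 v‖ ^ 2 := by
  rw [EuclideanSpace.norm_sq_eq]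
  simp [dotProduct, sq]

theorem msNorm_eq_zero_of_ae_eq_zero {f : Ω → Fin d → ℝ} (hf : f =ᵐ[μ] 0) :
    msNorm μ f = 0 := by
  rw [msNorm, msSq, integral_eq_zero_of_ae (hf.mono fun s hs => by simp [hs]), Real.sqrt_zero]

theorem msNorm_eq_lpNorm {f : Ω → Fin d → ℝ} (hf : AEStronglyMeasurable f μ) :
    msNorm μ f = lpNorm (fun s => WithLp.toLp 2 (f s)) 2 μ := by
  rw [lpNorm_eq_integral_norm_rpow_toReal two_ne_zero ENNReal.ofNat_ne_top]
  · simp [msNorm, msSq, dotProduct_self_eq_norm_toLp_sq, Real.sqrt_eq_rpow]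
  · exact (PiLp.continuous_toLp 2 _).comp_aestronglyMeasurable hf

theorem msNorm_add_le {f g : Ω → Fin d → ℝ} (hf : MemLp f 2 μ)
    (hg : AEStronglyMeasurable g μ) : msNorm μ (fun s => f s + g s) ≤ msNorm μ f + msNorm μ g := by
  rw [msNorm_eq_lpNorm (f := fun s => f s + g s) (hf.1.add hg), msNorm_eq_lpNorm hf.1,
    msNorm_eq_lpNorm hg]
  convert lpNorm_add_le hf.withLp_toLp one_le_two using 2
  exact funext fun s => WithLp.toLp_add 2 (f s) (g s)

theorem msNorm_eq_zero_iff {f : Ω → Fin d → ℝ} (hf : MemLp f 2 μ) :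
    msNorm μ f = 0 ↔ f =ᵐ[μ] 0 := by
  rw [msNorm_eq_lpNorm hf.1, lpNorm_eq_zero hf.withLp_toLp two_ne_zero]
  simp [Filter.EventuallyEq]

namespace Ctx

variable {n m : ℕ} (C : Ctx n m Ω)

theorem Fk_mono : Monotone C.Fk := fun _ _ hjk =>
  sup_le_sup_left (biSup_mono fun _ hi =>
    Finset.mem_range.2 ((Finset.mem_range.1 hi).trans_le hjk)) _

theorem measurable_w (k : ℕ) : Measurable[C.Fk (k + 1)] (C.w k) :=
  Measurable.of_comap_le <| le_sup_of_le_right <|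
    le_iSup₂ (f := fun i (_ : i ∈ Finset.range (k + 1)) =>
      MeasurableSpace.comap (C.w i) inferInstance) k (Finset.self_mem_range_succ k)

theorem indep_w_Fk (k : ℕ) :
    Indep (MeasurableSpace.comap (C.w k) inferInstance) (C.Fk k) C.Pr := by
  have := C.isProb
  let W : ℕ → MeasurableSpace Ω := fun i => MeasurableSpace.comap (C.w i) inferInstance
  have hW : ∀ i, W i ≤ ‹MeasurableSpace Ω› := fun i => (C.hw_meas i).comap_le
  have hpast : Indep (W k) (⨆ i ∈ Finset.range k, W i) C.Pr := by
    simpa using indep_iSup_of_disjoint hW ((iIndepFun_iff_iIndep _ _ _).1 C.hw_iid)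
      (S := {k}) (T := ↑(Finset.range k)) (by simp)
  have hG : Indep (W k ⊔ ⨆ i ∈ Finset.range k, W i) C.G C.Pr :=
    indep_of_indep_of_le_left C.hw_indep_G
      (sup_le (le_iSup W k) (iSup₂_le fun i _ => le_iSup W i))
  rw [Ctx.Fk, sup_comm]
  exact hpast.sup_right_of_indep_sup (hW k) (iSup₂_le fun i _ => hW i) C.hG hG

theorem indepFun_w {E : Type*} [MeasurableSpace E] {k : ℕ} {h : Ω → E}
    (hh : Measurable[C.Fk k] h) : IndepFun (C.w k) h C.Pr := by
  rw [IndepFun_iff_Indep]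
  exact indep_of_indep_of_le_right (C.indep_w_Fk k) hh.comap_le

theorem memLp_w (k : ℕ) : MemLp (C.w k) 2 C.Pr := by
  have h : MemLp id 2 (gauss C.σ) := memLp_id_gaussianReal' 2 (by simp)
  rw [← C.hw_gauss k] at h
  exact (memLp_map_measure_iff aestronglyMeasurable_id (C.hw_meas k).aemeasurable).1 h

theorem memLp_noise_mulVec {k d : ℕ} (M M' : Matrix (Fin n) (Fin d) ℝ) {h : Ω → Fin d → ℝ}
    (hh : Measurable[C.Fk k] h) (hL : MemLp h 2 C.Pr) :
    MemLp (fun s => (M + C.w k s • M') *ᵥ h s) 2 C.Pr := by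
  have hsplit : (fun s => (M + C.w k s • M') *ᵥ h s) =
      fun s => M *ᵥ h s + C.w k s • (M' *ᵥ h s) := by
    funext s
    rw [add_mulVec, smul_mulVec]
  rw [hsplit]
  have hind : IndepFun (C.w k) (fun s => M' *ᵥ h s) C.Pr := C.indepFun_w (by fun_prop)
  exact (hL.matrix_mulVec M).add (hind.memLp_two_smul (C.memLp_w k) (hL.matrix_mulVec M'))

theorem measurable_traj {x : Ω → Fin n → ℝ} {u : ℕ → Ω → Fin m → ℝ}
    (hx : Measurable[C.G] x) (hu : ∀ k, Measurable[C.Fk k] (u k)) :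
    ∀ k, Measurable[C.Fk k] (C.traj x u k)
  | 0 => hx.mono le_sup_left le_rfl
  | k + 1 => by
    have hxk := (measurable_traj hx hu k).mono (C.Fk_mono k.le_succ) le_rfl
    have huk := (hu k).mono (C.Fk_mono k.le_succ) le_rfl
    exact (measurable_add_smul_mulVec _ _ (C.measurable_w k) hxk).add
      (measurable_add_smul_mulVec _ _ (C.measurable_w k) huk)

theorem memLp_traj {x : Ω → Fin n → ℝ} {u : ℕ → Ω → Fin m → ℝ} (hx : C.InitOK x)
    (hu : C.Admissible u) : ∀ k, MemLp (C.traj x u k) 2 C.Pr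
  | 0 => hx.2
  | k + 1 =>
    (C.memLp_noise_mulVec _ _ (C.measurable_traj hx.1 (fun j => (hu j).1) k)
      (memLp_traj hx hu k)).add (C.memLp_noise_mulVec _ _ (hu k).1 (hu k).2)

theorem admissible_zero : C.Admissible fun _ _ => 0 := by
  have := C.isProb
  exact fun _ => ⟨measurable_const, memLp_const 0⟩

theorem Admissible.smul {C : Ctx n m Ω} {u : ℕ → Ω → Fin m → ℝ} (hu : C.Admissible u)
    (α : ℝ) : C.Admissible fun k s => α • u k s :=
  fun k => ⟨(hu k).1.const_smul α, (hu k).2.const_smul α⟩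

theorem Admissible.add {C : Ctx n m Ω} {u v : ℕ → Ω → Fin m → ℝ} (hu : C.Admissible u)
    (hv : C.Admissible v) : C.Admissible fun k s => u k s + v k s :=
  fun k => ⟨(hu k).1.add (hv k).1, (hu k).2.add (hv k).2⟩

theorem traj_smul (x : Ω → Fin n → ℝ) (u : ℕ → Ω → Fin m → ℝ) (α : ℝ) :
    ∀ k, C.traj (fun s => α • x s) (fun j s => α • u j s) k = fun s => α • C.traj x u k s
  | 0 => rfl
  | k + 1 => funext fun s => by
    simp only [Ctx.traj, congrFun (traj_smul x u α k) s, mulVec_smul, smul_add]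

theorem traj_add (x y : Ω → Fin n → ℝ) (u v : ℕ → Ω → Fin m → ℝ) :
    ∀ k, C.traj (fun s => x s + y s) (fun j s => u j s + v j s) k =
      fun s => C.traj x u k s + C.traj y v k s
  | 0 => rfl
  | k + 1 => funext fun s => by
    simp only [Ctx.traj, congrFun (traj_add x y u v k) s, mulVec_add]
    abel

theorem traj_zero_policy_apply {x : Ω → Fin n → ℝ} {s : Ω} (hx : x s = 0) :
    ∀ k, C.traj x (fun _ _ => 0) k s = 0
  | 0 => hx
  | k + 1 => by simp [Ctx.traj, traj_zero_policy_apply hx k]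

def weightedPeak (x : Ω → Fin n → ℝ) (u : ℕ → Ω → Fin m → ℝ) : ℝ≥0∞ :=
  ⨆ k : ℕ, ENNReal.ofReal (msNorm C.Pr (C.traj x u k) / C.rhoStar ^ k)

theorem eta_eq_iInf_weightedPeak (x : Ω → Fin n → ℝ) :
    C.eta x = ⨅ (u) (_ : C.Admissible u), C.weightedPeak x u := rfl

theorem eta_le_weightedPeak {x : Ω → Fin n → ℝ} {u : ℕ → Ω → Fin m → ℝ}
    (hu : C.Admissible u) : C.eta x ≤ C.weightedPeak x u :=
  iInf₂_le u hu

theorem ofReal_msNorm_le_eta (x : Ω → Fin n → ℝ) :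
    ENNReal.ofReal (msNorm C.Pr x) ≤ C.eta x :=
  le_iInf₂ fun _ _ => le_iSup_of_le 0 (by simp [Ctx.traj])

theorem weightedPeak_smul (x : Ω → Fin n → ℝ) (u : ℕ → Ω → Fin m → ℝ) (α : ℝ) :
    C.weightedPeak (fun s => α • x s) (fun k s => α • u k s) =
      ENNReal.ofReal |α| * C.weightedPeak x u := by
  simp only [weightedPeak, ENNReal.mul_iSup, traj_smul, msNorm_smul, mul_div_assoc,
    ENNReal.ofReal_mul (abs_nonneg α)]

theorem weightedPeak_add_le (hρ : 0 ≤ C.rhoStar) {x y : Ω → Fin n → ℝ}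
    {u v : ℕ → Ω → Fin m → ℝ} (hx : C.InitOK x) (hy : C.InitOK y) (hu : C.Admissible u)
    (hv : C.Admissible v) :
    C.weightedPeak (fun s => x s + y s) (fun k s => u k s + v k s) ≤
      C.weightedPeak x u + C.weightedPeak y v := by
  refine iSup_le fun k => ?_
  have hmink := msNorm_add_le (C.memLp_traj hx hu k) (C.memLp_traj hy hv k).1
  calc ENNReal.ofReal (msNorm C.Pr (C.traj (fun s => x s + y s) (fun k s => u k s + v k s) k)
        / C.rhoStar ^ k)
      ≤ ENNReal.ofReal (msNorm C.Pr (C.traj x u k) / C.rhoStar ^ k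
          + msNorm C.Pr (C.traj y v k) / C.rhoStar ^ k) := by
        rw [traj_add, ← add_div]
        exact ENNReal.ofReal_le_ofReal (div_le_div_of_nonneg_right hmink (pow_nonneg hρ k))
    _ ≤ ENNReal.ofReal (msNorm C.Pr (C.traj x u k) / C.rhoStar ^ k)
          + ENNReal.ofReal (msNorm C.Pr (C.traj y v k) / C.rhoStar ^ k) :=
        ENNReal.ofReal_add_le
    _ ≤ C.weightedPeak x u + C.weightedPeak y v :=
        add_le_add (le_iSup_of_le k le_rfl) (le_iSup_of_le k le_rfl)

theorem eta_eq_zero_of_ae_eq_zero {x : Ω → Fin n → ℝ} (hx : x =ᵐ[C.Pr] 0) :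
    C.eta x = 0 := by
  refine le_antisymm ((C.eta_le_weightedPeak C.admissible_zero).trans (iSup_le fun k => ?_))
    zero_le
  have hk : C.traj x (fun _ _ => 0) k =ᵐ[C.Pr] 0 :=
    hx.mono fun _ hs => C.traj_zero_policy_apply hs k
  simp [msNorm_eq_zero_of_ae_eq_zero hk]

theorem eta_eq_zero_iff {x : Ω → Fin n → ℝ} (hx : C.InitOK x) :
    C.eta x = 0 ↔ x =ᵐ[C.Pr] 0 := by
  refine ⟨fun h => ?_, C.eta_eq_zero_of_ae_eq_zero⟩
  have hle := C.ofReal_msNorm_le_eta x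
  rw [h, nonpos_iff_eq_zero, ENNReal.ofReal_eq_zero] at hle
  exact (msNorm_eq_zero_iff hx.2).1 (le_antisymm hle (Real.sqrt_nonneg _))

theorem eta_smul_le {α : ℝ} (hα : α ≠ 0) (x : Ω → Fin n → ℝ) :
    C.eta (fun s => α • x s) ≤ ENNReal.ofReal |α| * C.eta x := by
  have h₀ : ENNReal.ofReal |α| ≠ 0 := by simpa using hα
  simp only [eta_eq_iInf_weightedPeak, ENNReal.mul_iInf_of_ne h₀ ENNReal.ofReal_ne_top]
  exact le_iInf₂ fun u hu =>
    (C.eta_le_weightedPeak (hu.smul α)).trans_eq (C.weightedPeak_smul x u α)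

theorem eta_smul (x : Ω → Fin n → ℝ) (α : ℝ) :
    C.eta (fun s => α • x s) = ENNReal.ofReal |α| * C.eta x := by
  rcases eq_or_ne α 0 with rfl | hα
  · simpa using C.eta_eq_zero_of_ae_eq_zero (x := fun _ => 0) (ae_of_all _ fun _ => rfl)
  refine le_antisymm (C.eta_smul_le hα x) ?_
  calc ENNReal.ofReal |α| * C.eta x
        = ENNReal.ofReal |α| * C.eta (fun s => α⁻¹ • α • x s) := by simp [smul_smul, hα]
    _ ≤ ENNReal.ofReal |α| * (ENNReal.ofReal |α⁻¹| * C.eta fun s => α • x s) :=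
        mul_le_mul_right (C.eta_smul_le (inv_ne_zero hα) _) _
    _ = C.eta fun s => α • x s := by
        rw [← mul_assoc, ← ENNReal.ofReal_mul (abs_nonneg _), ← abs_mul, mul_inv_cancel₀ hα,
          abs_one, ENNReal.ofReal_one, one_mul]

theorem eta_add_le (hρ : 0 ≤ C.rhoStar) {x y : Ω → Fin n → ℝ} (hx : C.InitOK x)
    (hy : C.InitOK y) : C.eta (fun s => x s + y s) ≤ C.eta x + C.eta y := by
  simp only [eta_eq_iInf_weightedPeak, ENNReal.iInf_add, ENNReal.add_iInf]
  exact le_iInf₂ fun v hv => le_iInf₂ fun u hu =>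
    (C.eta_le_weightedPeak (hu.add hv)).trans (C.weightedPeak_add_le hρ hx hy hu hv)

end Ctx

theorem eta_is_norm_general {n m : ℕ} {Ω : Type} [MeasurableSpace Ω] (C : Ctx n m Ω)
    (hrho : 0 < C.rhoStar) :
    (∀ x : Ω → Fin n → ℝ, C.InitOK x → 0 ≤ C.eta x) ∧
    (∀ x : Ω → Fin n → ℝ, C.InitOK x → (C.eta x = 0 ↔ x =ᵐ[C.Pr] 0)) ∧
    (∀ x : Ω → Fin n → ℝ, C.InitOK x → ∀ α : ℝ,
      C.eta (fun s => α • x s) = ENNReal.ofReal |α| * C.eta x) ∧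
    (∀ x y : Ω → Fin n → ℝ, C.InitOK x → C.InitOK y →
      C.eta (fun s => x s + y s) ≤ C.eta x + C.eta y) :=
  ⟨fun _ _ => zero_le, fun _ hx => C.eta_eq_zero_iff hx, fun x _ α => C.eta_smul x α,
    fun _ _ hx hy => C.eta_add_le hrho.le hx hy⟩

/-- If `ρ* > 0` and `η(x) < ∞` for every `G`-measurable
`x ∈ L²(Ω;ℝⁿ)`, then `η` is a norm on the space of `G`-measurable elements of
`L²(Ω;ℝⁿ)`: nonnegativity, definiteness (up to a.s. equality), absolute
homogeneity, and the triangle inequality. -/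
theorem eta_is_norm {n m : ℕ} {Ω : Type} [MeasurableSpace Ω] (C : Ctx n m Ω)
    (hn : 0 < n) (hm : 0 < m)
    (hrho : 0 < C.rhoStar)
    (hfin : ∀ x : Ω → Fin n → ℝ, C.InitOK x → C.eta x < ⊤) :
    (∀ x : Ω → Fin n → ℝ, C.InitOK x → 0 ≤ C.eta x) ∧
    (∀ x : Ω → Fin n → ℝ, C.InitOK x → (C.eta x = 0 ↔ x =ᵐ[C.Pr] 0)) ∧
    (∀ x : Ω → Fin n → ℝ, C.InitOK x → ∀ α : ℝ,
      C.eta (fun s => α • x s) = ENNReal.ofReal |α| * C.eta x) ∧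
    (∀ x y : Ω → Fin n → ℝ, C.InitOK x → C.InitOK y →
      C.eta (fun s => x s + y s) ≤ C.eta x + C.eta y) :=
  eta_is_norm_general C hrho

end SCS
end
end

section
/- Assume R₀ := BᵀB + σ²·B̄ᵀB̄ is positive definite. Fix τ ∈ (0,1) and let P^(τ) be a symmetric positive definite matrix with Tr P^(τ) = 1 satisfying Φ̂_τ(P^(τ)) = P^(τ); set γ^(τ) := Tr((1−τ)·Φ(P^(τ)) + (τ/n)·I). Then γ^(τ)/(1−τ) − L(P^(τ)) = (τ/(n·(1−τ)))·λ_max((P^(τ))⁻¹). -/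
open Matrix MeasureTheory ProbabilityTheory
open scoped ENNReal Classical

noncomputable section

namespace SCS

variable {n m : ℕ}

variable {Ω : Type} [MeasurableSpace Ω]

section Rayleigh

variable {k : ℕ}

lemma abs_le_one_of_dotProduct_self_eq_one {x : Fin k → ℝ} (hx : x ⬝ᵥ x = 1) (i : Fin k) :
    |x i| ≤ 1 := by
  have h : x i * x i ≤ 1 :=
    hx ▸ Finset.single_le_sum (f := fun j => x j * x j) (fun j _ => mul_self_nonneg _)
      (Finset.mem_univ i)
  nlinarith [abs_nonneg (x i), abs_mul_abs_self (x i)]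

lemma bddAbove_rayleigh (M : Matrix (Fin k) (Fin k) ℝ) :
    BddAbove (Set.range fun x : {x : Fin k → ℝ // x ⬝ᵥ x = 1} => x.1 ⬝ᵥ M *ᵥ x.1) := by
  refine ⟨∑ i, ∑ j, |M i j|, ?_⟩
  rintro _ ⟨⟨x, hx⟩, rfl⟩
  simp only [dotProduct, Matrix.mulVec, Finset.mul_sum]
  refine Finset.sum_le_sum fun i _ => Finset.sum_le_sum fun j _ => ?_
  have hi := abs_le_one_of_dotProduct_self_eq_one hx i
  have hj := abs_le_one_of_dotProduct_self_eq_one hx j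
  calc x i * (M i j * x j) ≤ |x i| * |M i j| * |x j| := by
        rw [← abs_mul, ← abs_mul, ← mul_assoc, mul_comm (x i)]
        exact le_abs_self _
    _ ≤ 1 * |M i j| * 1 := by gcongr
    _ = |M i j| := by ring

lemma nonempty_unitSphere (hk : 0 < k) : Nonempty {x : Fin k → ℝ // x ⬝ᵥ x = 1} :=
  ⟨⟨Pi.single ⟨0, hk⟩ 1, by simp⟩⟩

lemma lamMin_smul_one_sub_smul (hk : 0 < k) (M : Matrix (Fin k) (Fin k) ℝ) (a : ℝ)
    {b : ℝ} (hb : 0 ≤ b) :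
    lamMin (a • (1 : Matrix (Fin k) (Fin k) ℝ) - b • M) = a - b * lamMax M := by
  have := nonempty_unitSphere hk
  have hrayleigh : ∀ x : {x : Fin k → ℝ // x ⬝ᵥ x = 1},
      x.1 ⬝ᵥ (a • (1 : Matrix (Fin k) (Fin k) ℝ) - b • M) *ᵥ x.1 = a - b * (x.1 ⬝ᵥ M *ᵥ x.1) := by
    rintro ⟨x, hx⟩
    simp [Matrix.sub_mulVec, Matrix.smul_mulVec, dotProduct_sub, hx]
  have hanti : Antitone fun t : ℝ => a - b * t := fun _ _ hst =>
    sub_le_sub_left (mul_le_mul_of_nonneg_left hst hb) a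
  rw [lamMin, lamMax, iInf_congr hrayleigh,
    hanti.map_ciSup_of_continuousAt (by fun_prop) (bddAbove_rayleigh M)]

end Rayleigh

section InvSqrt

variable {k : ℕ} {P : Matrix (Fin k) (Fin k) ℝ}

lemma spectral_sqrt_mul_self (hP : P.PosSemidef) :
    (hP.1.eigenvectorUnitary.1 * diagonal (fun i => Real.sqrt (hP.1.eigenvalues i))
        * (star hP.1.eigenvectorUnitary : Matrix (Fin k) (Fin k) ℝ)) *
      (hP.1.eigenvectorUnitary.1 * diagonal (fun i => Real.sqrt (hP.1.eigenvalues i))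
        * (star hP.1.eigenvectorUnitary : Matrix (Fin k) (Fin k) ℝ)) = P := by
  set U := hP.1.eigenvectorUnitary
  have hU : (star U : Matrix (Fin k) (Fin k) ℝ) * U.1 = 1 := Unitary.coe_star_mul_self U
  have hdiag : (fun i => Real.sqrt (hP.1.eigenvalues i) * Real.sqrt (hP.1.eigenvalues i))
      = RCLike.ofReal ∘ hP.1.eigenvalues := by
    funext i
    simp [Real.mul_self_sqrt (hP.eigenvalues_nonneg i)]
  simp only [Matrix.mul_assoc]
  rw [← Matrix.mul_assoc _ U.1, hU, Matrix.one_mul, ← Matrix.mul_assoc (diagonal _),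
    diagonal_mul_diagonal, hdiag, ← Matrix.mul_assoc]
  exact hP.1.spectral_theorem.symm

lemma exists_invSqrt_eq (hP : P.PosDef) :
    ∃ S : Matrix (Fin k) (Fin k) ℝ, IsUnit S ∧ S * S = P ∧ invSqrt P = S⁻¹ :=
  ⟨_, isUnit_of_mul_isUnit_left ((spectral_sqrt_mul_self hP.posSemidef).symm ▸ hP.isUnit),
    spectral_sqrt_mul_self hP.posSemidef, by rw [invSqrt, dif_pos hP.posSemidef]⟩

lemma invSqrt_mul_smul_sub_smul_mul_invSqrt (hP : P.PosDef) (a b : ℝ) :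
    invSqrt P * (a • P - b • (1 : Matrix (Fin k) (Fin k) ℝ)) * invSqrt P
      = a • (1 : Matrix (Fin k) (Fin k) ℝ) - b • P⁻¹ := by
  obtain ⟨S, hS, rfl, hinv⟩ := exists_invSqrt_eq hP
  have hSdet : IsUnit S.det := (Matrix.isUnit_iff_isUnit_det S).mp hS
  rw [hinv, Matrix.mul_inv_rev, Matrix.mul_sub, Matrix.sub_mul, Matrix.mul_smul, Matrix.smul_mul,
    Matrix.mul_smul, Matrix.smul_mul, Matrix.mul_one, ← Matrix.mul_assoc S⁻¹ S,
    Matrix.nonsing_inv_mul S hSdet, Matrix.one_mul, Matrix.mul_nonsing_inv S hSdet]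

end InvSqrt

theorem gap_formula_general {n m : ℕ} (hn : 0 < n)
    (σ : ℝ)
    (A Abar : Matrix (Fin n) (Fin n) ℝ) (B Bbar : Matrix (Fin n) (Fin m) ℝ)
    (τ : ℝ) (hτ : τ ∈ Set.Ioo (0 : ℝ) 1)
    (P : Matrix (Fin n) (Fin n) ℝ) (hP : P.PosDef) (htr : P.trace = 1)
    (hfix : PhiHat σ A Abar B Bbar τ P = P)
    (γτ : ℝ)
    (hγ : γτ = Matrix.trace ((1 - τ) • Phi σ A Abar B Bbar P
      + (τ / (n : ℝ)) • (1 : Matrix (Fin n) (Fin n) ℝ))) :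
    γτ / (1 - τ) - Lval σ A Abar B Bbar P
      = (τ / ((n : ℝ) * (1 - τ))) * lamMax P⁻¹ := by
  obtain ⟨hτ0, hτ1⟩ := hτ
  have h1τ : 1 - τ ≠ 0 := by linarith
  have hγ0 : γτ ≠ 0 := by
    rintro rfl
    rw [PhiHat, ← hγ, _root_.inv_zero, zero_smul] at hfix
    simp [← hfix] at htr
  have hscaled : (1 - τ) • Phi σ A Abar B Bbar P + (τ / n) • 1 = γτ • P := by
    rw [← inv_smul_eq_iff₀ hγ0, hγ]
    exact hfix
  -- at a fixed point `Φ(P)` is affine in `P`, so `P^{-1/2} Φ(P) P^{-1/2}` is affine in `P⁻¹`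
  have hPhi : Phi σ A Abar B Bbar P = (γτ / (1 - τ)) • P - (τ / (n * (1 - τ))) • 1 := by
    apply smul_right_injective _ h1τ
    have hcoef : (1 - τ) * (τ / (n * (1 - τ))) = τ / n := by field_simp
    simp only [smul_sub, smul_smul, mul_div_cancel₀ _ h1τ, hcoef]
    rw [eq_sub_iff_add_eq, hscaled]
  rw [Lval, hPhi, invSqrt_mul_smul_sub_smul_mul_invSqrt hP,
    lamMin_smul_one_sub_smul hn _ _ (by positivity)]
  ring

/-- The explicit gap formula:
`γ^(τ)/(1−τ) − L(P^(τ)) = (τ/(n·(1−τ)))·λ_max((P^(τ))⁻¹)`. -/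
theorem gap_formula {n m : ℕ} (hn : 0 < n) (hm : 0 < m)
    (σ : ℝ) (hσ : 0 < σ)
    (A Abar : Matrix (Fin n) (Fin n) ℝ) (B Bbar : Matrix (Fin n) (Fin m) ℝ)
    (hR0 : (Bᵀ * B + σ ^ 2 • (Bbarᵀ * Bbar)).PosDef)
    (τ : ℝ) (hτ : τ ∈ Set.Ioo (0 : ℝ) 1)
    (P : Matrix (Fin n) (Fin n) ℝ) (hP : P.PosDef) (htr : P.trace = 1)
    (hfix : PhiHat σ A Abar B Bbar τ P = P)
    (γτ : ℝ)
    (hγ : γτ = Matrix.trace ((1 - τ) • Phi σ A Abar B Bbar P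
      + (τ / (n : ℝ)) • (1 : Matrix (Fin n) (Fin n) ℝ))) :
    γτ / (1 - τ) - Lval σ A Abar B Bbar P
      = (τ / ((n : ℝ) * (1 - τ))) * lamMax P⁻¹ :=
  gap_formula_general hn σ A Abar B Bbar τ hτ P hP htr hfix γτ hγ

end SCS
end
end
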